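/- Let D ⊆ ℂ be a domain and k ∈ ℤ, and set w_k(z) = (1+|z|²)^{-(k+2)}. Let p, q be complex polynomials with q(z) ≠ 0 for all z ∈ D, set f = p/q on D, and suppose ∫_D |f|² w_k dλ < ∞ but there is no polynomial P with deg P ≤ k and p = P·q. Then the complement ℂ \ D has positive Lebesgue measure. -/

import Mathlib

/-! If `ℂ \ D` were null, `‖p/q‖² w_k` would be integrable on all of `ℂ`. It is not. If `q ∤ p`,
then `p/q` has a pole `z₀` and the integrand is `≳ ‖z - z₀‖⁻²` near `z₀`; if `p = P q` with
`deg P > k`, the integrand is `≳ ‖z‖^(2 deg P - 2(k+2)) ≥ ‖z‖⁻²` near infinity. In real dimension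
two, `‖x‖⁻²` is integrable neither near `0` nor near infinity. -/

open MeasureTheory

/-- The Fubini–Study weight of level `k`: `w_k(z) = (1+|z|²)^(-(k+2))`. -/
noncomputable def fsWeight (k : ℤ) (z : ℂ) : ℝ :=
  (1 + ‖z‖ ^ 2) ^ (-(k + 2))

open Asymptotics Bornology Filter Metric Polynomial Set Topology

lemma pow_pred_smul_inv_pow {n : ℕ} (hn : n ≠ 0) {y : ℝ} (hy : y ≠ 0) :
    y ^ (n - 1) • (y ^ n)⁻¹ = y⁻¹ := by
  obtain ⟨m, rfl⟩ := Nat.exists_eq_add_one_of_ne_zero hn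
  rw [smul_eq_mul, Nat.add_sub_cancel, pow_succ, mul_inv, ← mul_assoc,
    mul_inv_cancel₀ (pow_ne_zero m hy), one_mul]

lemma inv_sq_le_inv_pow_sq {a : ℝ} (ha₀ : 0 ≤ a) (ha₁ : a ≤ 1) {n : ℕ} (hn : n ≠ 0) :
    (a ^ 2)⁻¹ ≤ ((a ^ n) ^ 2)⁻¹ := by
  rcases ha₀.eq_or_lt with rfl | ha
  · simp [hn]
  · exact inv_anti₀ (by positivity)
      (pow_le_pow_left₀ (by positivity) (pow_le_of_le_one ha₀ ha₁ hn) 2)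

lemma Asymptotics.IsBigO.not_integrable {α : Type*} [MeasurableSpace α] {μ : Measure α}
    {l : Filter α} [l.IsMeasurablyGenerated] {u g : α → ℝ} (h : u =O[l] g)
    (hu : AEStronglyMeasurable u μ) (hul : ¬ IntegrableAtFilter u l μ) : ¬ Integrable g μ :=
  fun hg ↦ hul (h.integrableAtFilter hu.stronglyMeasurableAtFilter (hg.integrableAtFilter l))

section Radial

variable {E : Type*} [NormedAddCommGroup E] [NormedSpace ℝ E] [Nontrivial E]
  [FiniteDimensional ℝ E] [MeasurableSpace E] [BorelSpace E]
  (μ : Measure E) [μ.IsAddHaarMeasure]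

lemma not_integrableOn_ball_inv_norm_pow_finrank {r : ℝ} (hr : 0 < r) :
    ¬ IntegrableOn (fun x : E ↦ (‖x‖ ^ Module.finrank ℝ E)⁻¹) (ball 0 r) μ := by
  rw [integrableOn_fun_norm_addHaar μ (f := fun y ↦ (y ^ Module.finrank ℝ E)⁻¹),
    integrableOn_congr_fun (fun y hy ↦ pow_pred_smul_inv_pow Module.finrank_pos.ne' hy.1.ne')
      measurableSet_Ioo]
  simpa [← Real.rpow_neg_one] using (intervalIntegral.integrableOn_Ioo_rpow_iff (s := -1) hr).not

lemma not_integrableAtFilter_inv_norm_sub_pow_finrank (x₀ : E) :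
    ¬ IntegrableAtFilter (fun x : E ↦ (‖x - x₀‖ ^ Module.finrank ℝ E)⁻¹) (𝓝 x₀) μ := by
  rw [← map_add_left_nhds_zero, ← map_add_left_eq_self μ x₀,
    (measurableEmbedding_addLeft x₀).integrableAtFilter_map_iff]
  rintro ⟨s, hs, hint⟩
  obtain ⟨r, hr, hrs⟩ := Metric.mem_nhds_iff.mp hs
  exact not_integrableOn_ball_inv_norm_pow_finrank μ hr
    (by simpa [Function.comp_def] using hint.mono_set hrs)

lemma not_integrableAtFilter_inv_norm_pow_finrank_cocompact :
    ¬ IntegrableAtFilter (fun x : E ↦ (‖x‖ ^ Module.finrank ℝ E)⁻¹) (cocompact E) μ := by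
  rw [← cobounded_eq_cocompact]
  rintro ⟨s, hs, hint⟩
  obtain ⟨R, -, hRs⟩ := (hasBasis_cobounded_compl_closedBall (0 : E)).mem_iff.mp hs
  have h : Integrable (fun x : E ↦ (Ioi R).indicator (fun y ↦ (y ^ Module.finrank ℝ E)⁻¹) ‖x‖)
      μ := by
    have : (fun x : E ↦ (Ioi R).indicator (fun y ↦ (y ^ Module.finrank ℝ E)⁻¹) ‖x‖) =
        (closedBall 0 R)ᶜ.indicator (fun x ↦ (‖x‖ ^ Module.finrank ℝ E)⁻¹) := by
      ext x
      simp [indicator]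
    rw [this, integrable_indicator_iff measurableSet_closedBall.compl]
    exact hint.mono_set hRs
  rw [integrable_fun_norm_addHaar μ] at h
  refine not_integrableOn_Ioi_inv (a := max R 0) ((h.mono_set ?_).congr_fun ?_ measurableSet_Ioi)
  · exact Ioi_subset_Ioi (le_max_right R 0)
  · intro y hy
    obtain ⟨hRy, hy⟩ := max_lt_iff.mp (mem_Ioi.mp hy)
    dsimp only
    rw [indicator_of_mem (mem_Ioi.mpr hRy)]
    exact pow_pred_smul_inv_pow Module.finrank_pos.ne' hy.ne'

end Radial

lemma fsWeight_pos (k : ℤ) (z : ℂ) : 0 < fsWeight k z :=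
  zpow_pos (by positivity) _

lemma continuous_fsWeight (k : ℤ) : Continuous (fsWeight k) :=
  (continuous_const.add (continuous_norm.pow 2)).zpow₀ _ fun z ↦
    .inl (by positivity : (0 : ℝ) < 1 + ‖z‖ ^ 2).ne'

lemma inv_norm_pow_sq_le_fsWeight {k : ℤ} {n : ℕ} (hkn : k + 2 ≤ n) {z : ℂ} (hz : 1 ≤ ‖z‖) :
    ((‖z‖ ^ n) ^ 2)⁻¹ ≤ 2 ^ n * fsWeight k z := by
  have h1 : 1 ≤ 1 + ‖z‖ ^ 2 := by nlinarith
  calc ((‖z‖ ^ n) ^ 2)⁻¹ = 2 ^ n * ((2 * ‖z‖ ^ 2) ^ n)⁻¹ := by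
        field_simp
        ring
    _ ≤ 2 ^ n * ((1 + ‖z‖ ^ 2) ^ n)⁻¹ := by
        gcongr
        nlinarith
    _ = 2 ^ n * (1 + ‖z‖ ^ 2) ^ (-(n : ℤ)) := by rw [zpow_neg, zpow_natCast]
    _ ≤ 2 ^ n * fsWeight k z := by
        gcongr
        exact zpow_le_zpow_right₀ h1 (by omega)

namespace Polynomial

variable {K : Type*} [Field K] {p q : K[X]}

lemma exists_eval_div_eval_eq_div_pow (hp : p ≠ 0) (hq : q ≠ 0) {z₀ : K}
    (hlt : rootMultiplicity z₀ p < rootMultiplicity z₀ q) :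
    ∃ n ≠ 0, ∃ p₁ q₁ : K[X], p₁.eval z₀ ≠ 0 ∧ q₁.eval z₀ ≠ 0 ∧
      ∀ z, p.eval z / q.eval z = p₁.eval z / q₁.eval z / (z - z₀) ^ n := by
  obtain ⟨p₁, hpp₁, hp₁⟩ := p.exists_eq_pow_rootMultiplicity_mul_and_not_dvd hp z₀
  obtain ⟨q₁, hqq₁, hq₁⟩ := q.exists_eq_pow_rootMultiplicity_mul_and_not_dvd hq z₀
  rw [dvd_iff_isRoot] at hp₁ hq₁
  generalize rootMultiplicity z₀ p = l at hlt hpp₁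
  generalize rootMultiplicity z₀ q = m at hlt hqq₁
  refine ⟨m - l, by omega, p₁, q₁, hp₁, hq₁, fun z ↦ ?_⟩
  rw [hpp₁, hqq₁, show m = l + (m - l) by omega, pow_add, Nat.add_sub_cancel_left]
  simp only [eval_mul, eval_pow, eval_sub, eval_X, eval_C]
  rcases eq_or_ne z z₀ with rfl | hz
  · simp [show m - l ≠ 0 by omega]
  · have : z - z₀ ≠ 0 := sub_ne_zero.mpr hz
    field_simp

lemma exists_rootMultiplicity_lt_of_not_dvd [IsAlgClosed K] (hp : p ≠ 0) (hq : q ≠ 0)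
    (h : ¬ q ∣ p) : ∃ z, rootMultiplicity z p < rootMultiplicity z q := by
  classical
  by_contra! H
  refine h (((IsAlgClosed.splits q).dvd_iff_roots_le_roots hq hp).mpr ?_)
  exact Multiset.le_iff_count.mpr fun z ↦ by simpa only [count_roots] using H z

end Polynomial

lemma isBigO_nhds_inv_norm_sub_sq {p q : ℂ[X]} (hp : p ≠ 0) (hq : q ≠ 0) {z₀ : ℂ}
    (hlt : rootMultiplicity z₀ p < rootMultiplicity z₀ q) (k : ℤ) :
    (fun z ↦ (‖z - z₀‖ ^ 2)⁻¹) =O[𝓝 z₀] fun z ↦ ‖p.eval z / q.eval z‖ ^ 2 * fsWeight k z := by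
  obtain ⟨n, hn, p₁, q₁, hp₁, hq₁, hpq⟩ := exists_eval_div_eval_eq_div_pow hp hq hlt
  set h : ℂ → ℝ := fun z ↦ ‖p₁.eval z / q₁.eval z‖ ^ 2 * fsWeight k z
  have h_cont : ContinuousAt h z₀ :=
    ((p₁.continuousAt.div q₁.continuousAt hq₁).norm.pow 2).mul (continuous_fsWeight k).continuousAt
  have h_pos : 0 < h z₀ :=
    mul_pos (pow_pos (norm_pos_iff.mpr (div_ne_zero hp₁ hq₁)) 2) (fsWeight_pos k z₀)
  have one_isBigO : (fun _ ↦ (1 : ℝ)) =O[𝓝 z₀] h :=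
    (isBigO_const_left_iff_pos_le_norm one_ne_zero).mpr ⟨h z₀ / 2, half_pos h_pos,
      (h_cont.eventually (lt_mem_nhds (half_lt_self h_pos))).mono fun z hz ↦
        hz.le.trans (le_abs_self _)⟩
  have inv_sq_isBigO : (fun z ↦ (‖z - z₀‖ ^ 2)⁻¹) =O[𝓝 z₀] fun z ↦ ((‖z - z₀‖ ^ n) ^ 2)⁻¹ :=
    .of_norm_eventuallyLE <| by
      filter_upwards [closedBall_mem_nhds z₀ one_pos] with z hz
      rw [Real.norm_of_nonneg (by positivity)]
      exact inv_sq_le_inv_pow_sq (norm_nonneg _) (mem_closedBall_iff_norm.mp hz) hn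
  refine (one_isBigO.mul inv_sq_isBigO).congr (fun z ↦ one_mul _) fun z ↦ ?_
  simp only [hpq, h, norm_div, norm_pow, div_pow]
  ring

lemma isBigO_cocompact_inv_norm_sq {P : ℂ[X]} (hP : P ≠ 0) {k : ℤ} (hk : k < P.natDegree) :
    (fun z ↦ (‖z‖ ^ 2)⁻¹) =O[cocompact ℂ] fun z ↦ ‖P.eval z‖ ^ 2 * fsWeight k z := by
  rw [← cobounded_eq_cocompact]
  set d := P.natDegree
  have monomial_isBigO : (fun z ↦ ‖z‖ ^ d) =O[cobounded ℂ] fun z ↦ ‖P.eval z‖ :=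
    (((isBigO_refl (· ^ d) _).const_mul_right (leadingCoeff_ne_zero.mpr hP)).trans
      isEquivalent_cobounded_leading_monomial.symm.isBigO).norm_norm.congr_left
      fun z ↦ norm_pow z d
  have weight_isBigO : (fun z ↦ ((‖z‖ ^ (d + 1)) ^ 2)⁻¹) =O[cobounded ℂ] fsWeight k := by
    refine .of_bound (2 ^ (d + 1)) ?_
    filter_upwards [(hasBasis_cobounded_compl_closedBall (0 : ℂ)).mem_of_mem (i := 1) trivial]
      with z hz
    have hz : 1 < ‖z‖ := by simpa using hz
    rw [Real.norm_of_nonneg (by positivity), Real.norm_of_nonneg (fsWeight_pos k z).le]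
    exact inv_norm_pow_sq_le_fsWeight (by omega) hz.le
  refine ((monomial_isBigO.pow 2).mul weight_isBigO).congr (fun z ↦ ?_) fun z ↦ rfl
  rcases eq_or_ne z 0 with rfl | hz
  · simp
  · field_simp
    ring

lemma not_integrable_norm_eval_div_eval_sq_mul_fsWeight {p q : ℂ[X]} (hq : q ≠ 0) {k : ℤ}
    (hnp : ¬ ∃ P : ℂ[X], (∀ n : ℕ, k < (n : ℤ) → P.coeff n = 0) ∧ p = P * q) :
    ¬ Integrable fun z ↦ ‖p.eval z / q.eval z‖ ^ 2 * fsWeight k z := by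
  by_cases hdvd : q ∣ p
  · obtain ⟨P, rfl⟩ := hdvd
    obtain ⟨n, hkn, hn⟩ : ∃ n : ℕ, k < n ∧ P.coeff n ≠ 0 := by
      by_contra! h
      exact hnp ⟨P, h, mul_comm q P⟩
    have hP : P ≠ 0 := by
      rintro rfl
      exact hn (coeff_zero n)
    have h_eq : (fun z ↦ ‖P.eval z‖ ^ 2 * fsWeight k z) =ᶠ[cocompact ℂ]
        fun z ↦ ‖(q * P).eval z / q.eval z‖ ^ 2 * fsWeight k z := by
      filter_upwards [cocompact_le_cofinite (eventually_cofinite_not_isRoot hq)] with z hz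
      rw [eval_mul, mul_div_cancel_left₀ _ hz]
    refine ((isBigO_cocompact_inv_norm_sq hP ?_).congr' .rfl h_eq).not_integrable (by fun_prop) ?_
    · exact hkn.trans_le (mod_cast le_natDegree_of_ne_zero hn)
    · simpa [Complex.finrank_real_complex] using
        not_integrableAtFilter_inv_norm_pow_finrank_cocompact (E := ℂ) volume
  · have hp : p ≠ 0 := by
      rintro rfl
      exact hdvd (dvd_zero q)
    obtain ⟨z₀, hz₀⟩ := exists_rootMultiplicity_lt_of_not_dvd hp hq hdvd
    refine (isBigO_nhds_inv_norm_sub_sq hp hq hz₀ k).not_integrable (by fun_prop) ?_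
    simpa [Complex.finrank_real_complex] using
      not_integrableAtFilter_inv_norm_sub_pow_finrank volume z₀

theorem complement_pos_measure_of_nonextendable_rational_general (D : Set ℂ) (k : ℤ)
    (p q : Polynomial ℂ) (hq : ∀ z ∈ D, q.eval z ≠ 0)
    (f : ℂ → ℂ) (hfeq : ∀ z ∈ D, f z = p.eval z / q.eval z)
    (hL2 : (∫⁻ z in D, ENNReal.ofReal (‖f z‖ ^ 2 * fsWeight k z)) < ⊤)
    (hnp : ¬ ∃ P : Polynomial ℂ, (∀ n : ℕ, k < (n : ℤ) → P.coeff n = 0) ∧ p = P * q) :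
    0 < volume Dᶜ := by
  by_contra! h
  have hDc : volume Dᶜ = 0 := nonpos_iff_eq_zero.mp h
  have hD : ∀ᵐ z, z ∈ D := ae_iff.mpr hDc
  obtain ⟨z₁, hz₁⟩ := hD.exists
  have hq0 : q ≠ 0 := by
    rintro rfl
    exact hq z₁ hz₁ eval_zero
  refine not_integrable_norm_eval_div_eval_sq_mul_fsWeight hq0 hnp
    ((lintegral_ofReal_ne_top_iff_integrable ?_ (.of_forall fun z ↦ ?_)).mp ?_)
  · exact (((p.continuous.measurable.div q.continuous.measurable).norm.pow_const 2).mul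
      (continuous_fsWeight k).measurable).aestronglyMeasurable
  · exact mul_nonneg (sq_nonneg _) (fsWeight_pos k z).le
  · calc ∫⁻ z, ENNReal.ofReal (‖p.eval z / q.eval z‖ ^ 2 * fsWeight k z)
        = ∫⁻ z in D, ENNReal.ofReal (‖f z‖ ^ 2 * fsWeight k z) := by
          rw [Measure.restrict_congr_set (ae_eq_univ.mpr hDc), Measure.restrict_univ]
          exact lintegral_congr_ae (hD.mono fun z hz ↦ by simp only [hfeq z hz])
      _ ≠ ⊤ := hL2.ne

/-- Case I of the proof of the main theorem: if the rational function `f = p/q`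
(with `q` nonvanishing on the domain `D`) is square integrable over `D` for the
Fubini–Study weight `w_k` but is not a polynomial of degree at most `k`
(no `P` with `deg P ≤ k` and `p = P·q`), then the complement `ℂ \ D` has positive
Lebesgue measure. -/
theorem complement_pos_measure_of_nonextendable_rational (D : Set ℂ) (hDopen : IsOpen D)
    (hDconn : IsConnected D) (k : ℤ)
    (p q : Polynomial ℂ) (hq : ∀ z ∈ D, q.eval z ≠ 0)
    (f : ℂ → ℂ) (hfeq : ∀ z ∈ D, f z = p.eval z / q.eval z)
    (hL2 : (∫⁻ z in D, ENNReal.ofReal (‖f z‖ ^ 2 * fsWeight k z)) < ⊤)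
    (hnp : ¬ ∃ P : Polynomial ℂ, (∀ n : ℕ, k < (n : ℤ) → P.coeff n = 0) ∧ p = P * q) :
    0 < volume Dᶜ :=
  complement_pos_measure_of_nonextendable_rational_general D k p q hq f hfeq hL2 hnp
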